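/- arXiv:2010.00773 — 2 statements merged into one kernel-verified Lean document; each statement's English description precedes it below -/
import Mathlib

section
/- Let Ω be a bounded domain or the torus, let p ∈ [1,∞], T > 0, and let u : (0,T) → L^p(Ω) satisfy u ∈ L²(0,T; L^p(Ω)) and t ↦ √t·∂ₜu(t) ∈ L²(0,T; L^p(Ω)). Then for every α ∈ (0, 1/2), u belongs to the fractional Sobolev space H^{1/2 − α}(0,T; L^p(Ω)) and there is a constant C_{α,T}, depending only on α and T, such that ‖u‖²_{H^{1/2−α}(0,T;L^p)} ≤ ‖u‖²_{L²(0,T;L^p)} + C_{α,T} ‖√t·∂ₜu‖²_{L²(0,T;L^p)}. -/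
noncomputable section
open MeasureTheory Real Set ENNReal

open intervalIntegral in
lemma lint_shift_rpow_left {a b e : ℝ} (hab : a ≤ b) (he : -1 < e) :
    ∫⁻ r in Set.Ioo a b, ENNReal.ofReal ((r - a) ^ e) =
      ENNReal.ofReal ((b - a) ^ (e + 1) / (e + 1)) := by
  have hi : IntervalIntegrable (fun x : ℝ => (x - a) ^ e) volume a b := by
    have h0 := (intervalIntegrable_rpow' (a := 0) (b := b - a) he).comp_sub_right a
    simpa using h0
  have hInt : MeasureTheory.IntegrableOn (fun x : ℝ => (x - a) ^ e) (Set.Ioo a b) :=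
    (intervalIntegrable_iff_integrableOn_Ioo_of_le hab).1 hi
  have hnn : 0 ≤ᵐ[volume.restrict (Set.Ioo a b)] fun x : ℝ => (x - a) ^ e := by
    refine (ae_restrict_iff' measurableSet_Ioo).2 (Filter.Eventually.of_forall fun x hx => ?_)
    exact Real.rpow_nonneg (by linarith [hx.1]) _
  rw [← MeasureTheory.ofReal_integral_eq_lintegral_ofReal hInt hnn]
  congr 1
  rw [← MeasureTheory.integral_Ioc_eq_integral_Ioo, ← intervalIntegral.integral_of_le hab,
    intervalIntegral.integral_comp_sub_right (fun x => x ^ e) a]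
  rw [integral_rpow (Or.inl he), sub_self, Real.zero_rpow (by linarith)]
  ring

open intervalIntegral in
lemma lint_shift_rpow_right {a b e : ℝ} (hab : a ≤ b) (he : -1 < e) :
    ∫⁻ r in Set.Ioo a b, ENNReal.ofReal ((b - r) ^ e) =
      ENNReal.ofReal ((b - a) ^ (e + 1) / (e + 1)) := by
  have hi : IntervalIntegrable (fun x : ℝ => (b - x) ^ e) volume a b := by
    have h0 := (intervalIntegrable_rpow' (a := 0) (b := b - a) he).comp_sub_left b
    simpa using h0.symm
  have hInt : MeasureTheory.IntegrableOn (fun x : ℝ => (b - x) ^ e) (Set.Ioo a b) :=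
    (intervalIntegrable_iff_integrableOn_Ioo_of_le hab).1 hi
  have hnn : 0 ≤ᵐ[volume.restrict (Set.Ioo a b)] fun x : ℝ => (b - x) ^ e := by
    refine (ae_restrict_iff' measurableSet_Ioo).2 (Filter.Eventually.of_forall fun x hx => ?_)
    exact Real.rpow_nonneg (by linarith [hx.2]) _
  rw [← MeasureTheory.ofReal_integral_eq_lintegral_ofReal hInt hnn]
  congr 1
  rw [← MeasureTheory.integral_Ioc_eq_integral_Ioo, ← intervalIntegral.integral_of_le hab,
    intervalIntegral.integral_comp_sub_left (fun x => x ^ e) b]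
  rw [integral_rpow (Or.inl he), sub_self, Real.zero_rpow (by linarith)]
  ring

example (c : ℝ) : Measurable fun x : ℝ => ENNReal.ofReal (x ^ c) := by fun_prop

lemma half_sq (x : ℝ≥0∞) : (x ^ (1/(2:ℝ))) ^ (2:ℕ) = x := by
  rw [← ENNReal.rpow_natCast (x ^ (1/(2:ℝ))) 2, ← ENNReal.rpow_mul]; norm_num

lemma key_pointwise
    {X : Type} [NormedAddCommGroup X] [NormedSpace ℝ X] [CompleteSpace X]
    {T α : ℝ} (hα0 : 0 < α) (hα2 : α < 1/2)
    {u u' : ℝ → X} (hderiv : ∀ t ∈ Set.Ioo (0:ℝ) T, HasDerivAt u (u' t) t)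
    (hu'2 : IntegrableOn (fun t => t * ‖u' t‖ ^ 2) (Set.Ioo 0 T))
    {s t : ℝ} (hs : s ∈ Set.Ioo (0:ℝ) T) (ht : t ∈ Set.Ioo (0:ℝ) T) (hst : s < t) :
    ENNReal.ofReal (‖u t - u s‖ ^ 2 / (t - s) ^ (2 - 2*α)) ≤
      ENNReal.ofReal ((t - s) ^ (α - 1) / (1 - α)) *
        ∫⁻ r in Set.Ioo s t, ENNReal.ofReal (r ^ α) * (‖deriv u r‖₊ : ℝ≥0∞) ^ 2 := by
  have hs0 : 0 < s := hs.1
  have ht0 : t < T := ht.2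
  have hts : 0 < t - s := by linarith
  have hα1 : α < 1 := by linarith
  have hIccsub : Set.Icc s t ⊆ Set.Ioo 0 T := fun r hr =>
    ⟨lt_of_lt_of_le hs0 hr.1, lt_of_le_of_lt hr.2 ht0⟩
  have hIocsub : Set.Ioc s t ⊆ Set.Ioo 0 T := fun r hr =>
    ⟨lt_trans hs0 hr.1, lt_of_le_of_lt hr.2 ht0⟩
  have hd : ∀ r ∈ Set.Ioc s t, deriv u r = u' r := fun r hr => (hderiv r (hIocsub hr)).deriv
  have hmeas : AEStronglyMeasurable u' (volume.restrict (Set.Ioc s t)) :=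
    (aestronglyMeasurable_deriv u _).congr
      ((ae_restrict_iff' measurableSet_Ioc).2 (Filter.Eventually.of_forall hd))
  have hii : IntervalIntegrable u' volume s t := by
    rw [intervalIntegrable_iff_integrableOn_Ioc_of_le hst.le]
    have hg : IntegrableOn (fun r => 1 + s⁻¹ * (r * ‖u' r‖ ^ 2)) (Set.Ioc s t) :=
      (integrableOn_const measure_Ioc_lt_top.ne).add
        ((hu'2.mono_set hIocsub).const_mul s⁻¹)
    refine hg.mono' hmeas ?_
    refine (ae_restrict_iff' measurableSet_Ioc).2 (Filter.Eventually.of_forall fun r hr => ?_)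
    have h1 : (1:ℝ) ≤ s⁻¹ * r := by
      rw [← div_eq_inv_mul]; exact (one_le_div hs0).2 hr.1.le
    have h2 : ‖u' r‖ ^ 2 ≤ s⁻¹ * (r * ‖u' r‖ ^ 2) := by
      rw [← mul_assoc]
      exact le_mul_of_one_le_left (sq_nonneg _) h1
    have h3 : ‖u' r‖ ≤ 1 + ‖u' r‖ ^ 2 := by nlinarith [sq_nonneg (‖u' r‖ - 1), norm_nonneg (u' r)]
    have h4 : ‖(fun r => u' r) r‖ = ‖u' r‖ := rfl
    calc ‖u' r‖ ≤ 1 + ‖u' r‖ ^ 2 := h3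
      _ ≤ 1 + s⁻¹ * (r * ‖u' r‖ ^ 2) := by linarith
  have hftc : ∫ r in s..t, u' r = u t - u s :=
    intervalIntegral.integral_eq_sub_of_hasDerivAt
      (fun r hr => hderiv r (hIccsub (by rwa [Set.uIcc_of_le hst.le] at hr))) hii
  have hb1 : (‖u t - u s‖₊ : ℝ≥0∞) ≤ ∫⁻ r in Set.Ioc s t, (‖u' r‖₊ : ℝ≥0∞) := by
    rw [← hftc, intervalIntegral.integral_of_le hst.le]
    exact enorm_integral_le_lintegral_enorm _
  set ν := volume.restrict (Set.Ioc s t) with hν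
  set f : ℝ → ℝ≥0∞ := fun r => ENNReal.ofReal (r ^ (-(α/2))) with hf
  set g : ℝ → ℝ≥0∞ := fun r => ENNReal.ofReal (r ^ (α/2)) * (‖u' r‖₊ : ℝ≥0∞) with hg
  have hr0 : ∀ᵐ r ∂ν, r ∈ Set.Ioc s t := ae_restrict_mem measurableSet_Ioc
  have hnn' : AEMeasurable (fun r => (‖u' r‖₊ : ℝ≥0∞)) ν := hmeas.enorm
  have hsq2 : ∀ x : ℝ≥0∞, x ^ (2:ℝ) = x ^ (2:ℕ) := fun x => by
    rw [← ENNReal.rpow_natCast x 2]; norm_num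
  have hfm : AEMeasurable f ν := by fun_prop
  have hgm : AEMeasurable g ν :=
    (by fun_prop : Measurable fun r : ℝ => ENNReal.ofReal (r ^ (α/2))).aemeasurable.mul hnn'
  have hCS := ENNReal.lintegral_mul_le_Lp_mul_Lq ν (p := 2) (q := 2)
    Real.HolderConjugate.two_two hfm hgm
  have hfg : ∫⁻ r, (‖u' r‖₊ : ℝ≥0∞) ∂ν = ∫⁻ r, (f * g) r ∂ν := by
    refine lintegral_congr_ae (hr0.mono fun r hr => ?_)
    have h0 : 0 < r := lt_trans hs0 hr.1
    rw [Pi.mul_apply, hf, hg, ← mul_assoc, ← ENNReal.ofReal_mul (Real.rpow_nonneg h0.le _),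
      ← Real.rpow_add h0]
    norm_num
  have hA : ∫⁻ r, f r ^ (2:ℝ) ∂ν ≤ ENNReal.ofReal ((t - s) ^ (1 - α) / (1 - α)) := by
    have step : ∫⁻ r, f r ^ (2:ℝ) ∂ν ≤ ∫⁻ r, ENNReal.ofReal ((r - s) ^ (-α)) ∂ν := by
      refine lintegral_mono_ae (hr0.mono fun r hr => ?_)
      have h0 : 0 < r := lt_trans hs0 hr.1
      have hrs : 0 < r - s := by linarith [hr.1]
      rw [hf, ENNReal.ofReal_rpow_of_nonneg (Real.rpow_nonneg h0.le _) (by norm_num),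
        ← Real.rpow_mul h0.le]
      have : -(α/2) * 2 = -α := by ring
      rw [this]
      exact ENNReal.ofReal_le_ofReal
        (Real.rpow_le_rpow_of_nonpos hrs (by linarith) (by linarith))
    refine step.trans ?_
    rw [hν, ← setLIntegral_congr (Ioo_ae_eq_Ioc (a := s) (b := t))]
    rw [lint_shift_rpow_left hst.le (by linarith)]
    have : -α + 1 = 1 - α := by ring
    rw [this]
  have hB : ∫⁻ r, g r ^ (2:ℝ) ∂ν
      = ∫⁻ r in Set.Ioo s t, ENNReal.ofReal (r ^ α) * (‖deriv u r‖₊ : ℝ≥0∞) ^ 2 := by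
    refine ((lintegral_congr_ae (hr0.mono fun r hr => ?_)).trans
      (setLIntegral_congr (Ioo_ae_eq_Ioc (a := s) (b := t))).symm :)
    have h0 : 0 < r := lt_trans hs0 hr.1
    rw [hg, ENNReal.mul_rpow_of_nonneg _ _ (by norm_num : (0:ℝ) ≤ 2),
      ENNReal.ofReal_rpow_of_nonneg (Real.rpow_nonneg h0.le _) (by norm_num),
      ← Real.rpow_mul h0.le, (show α/2*2 = α by ring), hd r hr, hsq2]
  -- final assembly
  have hD : 0 < (t - s) ^ (2 - 2*α) := Real.rpow_pos_of_pos hts _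
  rw [ENNReal.ofReal_div_of_pos hD, ENNReal.ofReal_pow (norm_nonneg _),
    ofReal_norm_eq_enorm]
  refine ENNReal.div_le_of_le_mul ?_
  have hexp : (t-s)^(1-α)/(1-α) = (t-s)^(α-1)/(1-α) * (t-s)^(2-2*α) := by
    rw [div_mul_eq_mul_div, ← Real.rpow_add hts, (show α-1+(2-2*α) = 1-α by ring)]
  calc (‖u t - u s‖₊ : ℝ≥0∞) ^ 2 ≤ (∫⁻ r, (‖u' r‖₊ : ℝ≥0∞) ∂ν) ^ 2 := pow_le_pow_left' hb1 2
    _ = (∫⁻ r, (f * g) r ∂ν) ^ 2 := by rw [hfg]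
    _ ≤ ((∫⁻ r, f r ^ (2:ℝ) ∂ν) ^ (1/(2:ℝ)) * (∫⁻ r, g r ^ (2:ℝ) ∂ν) ^ (1/(2:ℝ))) ^ 2 :=
        pow_le_pow_left' hCS 2
    _ = (∫⁻ r, f r ^ (2:ℝ) ∂ν) * (∫⁻ r, g r ^ (2:ℝ) ∂ν) := by
        rw [mul_pow, half_sq, half_sq]
    _ ≤ ENNReal.ofReal ((t-s)^(1-α)/(1-α)) *
          ∫⁻ r in Set.Ioo s t, ENNReal.ofReal (r ^ α) * (‖deriv u r‖₊ : ℝ≥0∞) ^ 2 := by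
        rw [hB]; exact mul_le_mul_left hA _
    _ = ENNReal.ofReal ((t - s) ^ (α - 1) / (1 - α)) *
          (∫⁻ r in Set.Ioo s t, ENNReal.ofReal (r ^ α) * (‖deriv u r‖₊ : ℝ≥0∞) ^ 2) *
          ENNReal.ofReal ((t - s) ^ (2 - 2*α)) := by
        rw [hexp, ENNReal.ofReal_mul (div_nonneg (Real.rpow_nonneg hts.le _) (by linarith))]; ring

set_option maxHeartbeats 1600000 in
/-- **Lemma 2.3: shift of time regularity.**  Let `u : (0,T) → L^p(Ω)` satisfy
`u ∈ L²(0,T;L^p)` and `√t ∂ₜu ∈ L²(0,T;L^p)`.  Then for every `α ∈ (0,1/2)` one has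
`u ∈ H^{1/2−α}(0,T;L^p)` with
`‖u‖²_{H^{1/2−α}} ≤ ‖u‖²_{L²(0,T;L^p)} + C_{α,T} ‖√t ∂ₜu‖²_{L²(0,T;L^p)}`,
where `C_{α,T}` depends only on `α` and `T`, and the `H^s(0,T;L^p)` seminorm is the
Sobolev–Slobodeckij double integral. -/
theorem time_fractional_regularity :
    ∃ C : ℝ → ℝ → ℝ,
      ∀ (Ω : Type) [inst : MeasurableSpace Ω] (ν : Measure Ω) (E : Type)
        [instE : NormedAddCommGroup E] [instE2 : NormedSpace ℝ E] (p : ℝ≥0∞) [hp : Fact (1 ≤ p)]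
        (T : ℝ), 0 < T →
        ∀ (u u' : ℝ → MeasureTheory.Lp E p ν),
          (∀ t ∈ Set.Ioo (0:ℝ) T, HasDerivAt u (u' t) t) →
          IntegrableOn (fun t => ‖u t‖ ^ 2) (Set.Ioo 0 T) →
          IntegrableOn (fun t => t * ‖u' t‖ ^ 2) (Set.Ioo 0 T) →
          ∀ α ∈ Set.Ioo (0:ℝ) (1/2),
            ENNReal.ofReal (∫ t in Set.Ioo (0:ℝ) T, ‖u t‖ ^ 2)
              + (∫⁻ t in Set.Ioo (0:ℝ) T, ∫⁻ s in Set.Ioo (0:ℝ) T,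
                  ENNReal.ofReal (‖u t - u s‖ ^ 2 / |t - s| ^ (1 + 2 * (1/2 - α))))
            ≤ ENNReal.ofReal ((∫ t in Set.Ioo (0:ℝ) T, ‖u t‖ ^ 2)
                + C α T * ∫ t in Set.Ioo (0:ℝ) T, t * ‖u' t‖ ^ 2) := by
  refine ⟨fun α T => T ^ (2*α) / (α * (1-α)^2), ?_⟩
  intro Ω inst ν E instE instE2 p hp T hT u u' hderiv hu2 hu'2 α hα
  obtain ⟨hα0, hα2⟩ := hα
  have hα1 : α < 1 := by linarith
  have hC0 : 0 ≤ T ^ (2*α) / (α * (1-α)^2) := by positivity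
  have hB0 : 0 ≤ ∫ t in Set.Ioo (0:ℝ) T, t * ‖u' t‖ ^ 2 :=
    setIntegral_nonneg measurableSet_Ioo fun t ht => mul_nonneg ht.1.le (sq_nonneg _)
  have hA0 : 0 ≤ ∫ t in Set.Ioo (0:ℝ) T, ‖u t‖ ^ 2 :=
    setIntegral_nonneg measurableSet_Ioo fun t _ => sq_nonneg _
  rw [ENNReal.ofReal_add hA0 (mul_nonneg hC0 hB0)]
  refine add_le_add_right ?_ _
  simp only [show (1 + 2 * (1/2 - α) : ℝ) = 2 - 2*α from by ring]
  set e : Lp E p ν →ₗᵢ[ℝ] UniformSpace.Completion (Lp E p ν) :=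
    UniformSpace.Completion.toComplₗᵢ with hedef
  set v : ℝ → UniformSpace.Completion (Lp E p ν) := fun t => e (u t) with hvdef
  set v' : ℝ → UniformSpace.Completion (Lp E p ν) := fun t => e (u' t) with hv'def
  have hderiv' : ∀ t ∈ Set.Ioo (0:ℝ) T, HasDerivAt v (v' t) t := fun t ht =>
    (e.toContinuousLinearMap.hasFDerivAt).comp_hasDerivAt t (hderiv t ht)
  have hnormsub : ∀ a b, ‖u a - u b‖ = ‖v a - v b‖ := fun a b => by
    rw [hvdef]; simp only [← map_sub]; rw [e.norm_map]
  have hnorm' : ∀ a, ‖v' a‖ = ‖u' a‖ := fun a => e.norm_map _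
  have hv'2 : IntegrableOn (fun t => t * ‖v' t‖ ^ 2) (Set.Ioo 0 T) := by
    have : (fun t => t * ‖v' t‖ ^ 2) = fun t => t * ‖u' t‖ ^ 2 := by
      funext a; rw [hnorm']
    rw [this]; exact hu'2
  set G : ℝ → ℝ≥0∞ := fun r => ENNReal.ofReal (r ^ α) * (‖deriv v r‖₊ : ℝ≥0∞) ^ 2 with hGdef
  have hGmeas : Measurable G := by
    rw [hGdef]
    exact (by fun_prop : Measurable fun r : ℝ => ENNReal.ofReal (r ^ α)).mul
      ((stronglyMeasurable_deriv v).enorm.pow_const 2)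
  have hGfin : ∀ r, G r ≠ ∞ := fun r =>
    ENNReal.mul_ne_top ENNReal.ofReal_ne_top (by
      exact ENNReal.pow_ne_top ENNReal.coe_ne_top)
  -- pointwise bound
  have hpoint : ∀ t ∈ Set.Ioo (0:ℝ) T, ∀ s ∈ Set.Ioo (0:ℝ) T,
      ENNReal.ofReal (‖u t - u s‖ ^ 2 / |t - s| ^ (2 - 2*α)) ≤
        ENNReal.ofReal ((1-α)⁻¹) * (ENNReal.ofReal (|t - s| ^ (α-1)) *
          ∫⁻ r in Set.Ioo (min s t) (max s t), G r) := by
    intro t ht s hs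
    rcases lt_trichotomy s t with h | h | h
    · rw [show |t - s| = t - s from abs_of_pos (by linarith), min_eq_left h.le,
        max_eq_right h.le, ← mul_assoc,
        ← ENNReal.ofReal_mul (inv_nonneg.2 (by linarith)), inv_mul_eq_div, hnormsub]
      exact key_pointwise hα0 hα2 hderiv' hv'2 hs ht h
    · subst h; simp
    · rw [show |t - s| = s - t from by rw [abs_sub_comm]; exact abs_of_pos (by linarith),
        min_eq_right h.le, max_eq_left h.le, ← mul_assoc,
        ← ENNReal.ofReal_mul (inv_nonneg.2 (by linarith)), inv_mul_eq_div,
        norm_sub_rev, hnormsub]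
      exact key_pointwise hα0 hα2 hderiv' hv'2 ht hs h
  -- measurability of the triple integrand
  have hΦmeas : Measurable (fun q : ℝ × ℝ × ℝ =>
      (Set.Ioo (min q.2.1 q.1) (max q.2.1 q.1)).indicator G q.2.2 *
        ENNReal.ofReal (|q.1 - q.2.1| ^ (α-1))) := by
    refine Measurable.mul ?_ (by fun_prop)
    simp only [Set.indicator_apply, Set.mem_Ioo]
    refine Measurable.ite ?_ (hGmeas.comp measurable_snd.snd) measurable_const
    rw [Set.setOf_and]
    exact MeasurableSet.inter
      (measurableSet_lt (measurable_snd.fst.min measurable_fst) measurable_snd.snd)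
      (measurableSet_lt measurable_snd.snd (measurable_snd.fst.max measurable_fst))
  have hswap1 : ∀ t : ℝ,
      (∫⁻ s in Set.Ioo (0:ℝ) T, ∫⁻ r in Set.Ioo (0:ℝ) T,
        (Set.Ioo (min s t) (max s t)).indicator G r * ENNReal.ofReal (|t - s| ^ (α-1)))
      = ∫⁻ r in Set.Ioo (0:ℝ) T, ∫⁻ s in Set.Ioo (0:ℝ) T,
        (Set.Ioo (min s t) (max s t)).indicator G r * ENNReal.ofReal (|t - s| ^ (α-1)) :=
    fun t => lintegral_lintegral_swap
      ((hΦmeas.comp (measurable_const.prodMk measurable_id)).aemeasurable)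
  have hswap2 :
      (∫⁻ t in Set.Ioo (0:ℝ) T, ∫⁻ r in Set.Ioo (0:ℝ) T, ∫⁻ s in Set.Ioo (0:ℝ) T,
        (Set.Ioo (min s t) (max s t)).indicator G r * ENNReal.ofReal (|t - s| ^ (α-1)))
      = ∫⁻ r in Set.Ioo (0:ℝ) T, ∫⁻ t in Set.Ioo (0:ℝ) T, ∫⁻ s in Set.Ioo (0:ℝ) T,
        (Set.Ioo (min s t) (max s t)).indicator G r * ENNReal.ofReal (|t - s| ^ (α-1)) := by
    have hm2 : Measurable (fun q : (ℝ × ℝ) × ℝ =>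
        (Set.Ioo (min q.2 q.1.1) (max q.2 q.1.1)).indicator G q.1.2 *
          ENNReal.ofReal (|q.1.1 - q.2| ^ (α-1))) :=
      hΦmeas.comp ((measurable_fst.fst).prodMk (measurable_snd.prodMk measurable_fst.snd))
    exact lintegral_lintegral_swap (hm2.lintegral_prod_right'.aemeasurable)
  -- 1D integrals
  have hIio : ∀ r ∈ Set.Ioo (0:ℝ) T,
      ∫⁻ x in Set.Ioo (0:ℝ) T, (if x < r then ENNReal.ofReal ((r-x) ^ (-α)) else 0)
        = ENNReal.ofReal (r ^ (1-α) / (1-α)) := by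
    intro r hr
    have h1 : ∀ x : ℝ, (if x < r then ENNReal.ofReal ((r-x) ^ (-α)) else 0)
        = (Set.Iio r).indicator (fun x => ENNReal.ofReal ((r-x) ^ (-α))) x := by
      intro x; simp [Set.indicator_apply]
    rw [lintegral_congr h1, lintegral_indicator measurableSet_Iio,
      Measure.restrict_restrict measurableSet_Iio,
      show Set.Iio r ∩ Set.Ioo (0:ℝ) T = Set.Ioo 0 r from
        Set.ext fun x => ⟨fun h => ⟨h.2.1, h.1⟩, fun h => ⟨h.2, h.1, h.2.trans hr.2⟩⟩,
      lint_shift_rpow_right hr.1.le (by linarith : (-1:ℝ) < -α), sub_zero,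
      show -α + 1 = 1 - α from by ring]
  have hIoi : ∀ r ∈ Set.Ioo (0:ℝ) T,
      ∫⁻ x in Set.Ioo (0:ℝ) T, (if r < x then ENNReal.ofReal ((x-r) ^ (2*α-1)) else 0)
        = ENNReal.ofReal ((T-r) ^ (2*α) / (2*α)) := by
    intro r hr
    have h1 : ∀ x : ℝ, (if r < x then ENNReal.ofReal ((x-r) ^ (2*α-1)) else 0)
        = (Set.Ioi r).indicator (fun x => ENNReal.ofReal ((x-r) ^ (2*α-1))) x := by
      intro x; simp [Set.indicator_apply]
    rw [lintegral_congr h1, lintegral_indicator measurableSet_Ioi,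
      Measure.restrict_restrict measurableSet_Ioi,
      show Set.Ioi r ∩ Set.Ioo (0:ℝ) T = Set.Ioo r T from
        Set.ext fun x => ⟨fun h => ⟨h.1, h.2.2⟩, fun h => ⟨h.1, hr.1.trans h.1, h.2⟩⟩,
      lint_shift_rpow_left hr.2.le (by linarith : (-1:ℝ) < 2*α-1),
      show 2*α - 1 + 1 = 2*α from by ring]
  -- the key per-r bound
  have hKey : ∀ r ∈ Set.Ioo (0:ℝ) T,
      (∫⁻ t in Set.Ioo (0:ℝ) T, ∫⁻ s in Set.Ioo (0:ℝ) T,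
          (Set.Ioo (min s t) (max s t)).indicator G r * ENNReal.ofReal (|t - s| ^ (α-1)))
        ≤ G r * ENNReal.ofReal (2 * (T ^ (2*α) / (2*α)) * (r ^ (1-α) / (1-α))) := by
    intro r hr
    set η : ℝ → ℝ≥0∞ := fun x => if r < x then ENNReal.ofReal ((x-r) ^ (2*α-1)) else 0 with hη
    set ζ : ℝ → ℝ≥0∞ := fun x => if x < r then ENNReal.ofReal ((r-x) ^ (-α)) else 0 with hζ
    have hζm : Measurable ζ := Measurable.ite measurableSet_Iio (by fun_prop) measurable_const
    have hηm : Measurable η := Measurable.ite measurableSet_Ioi (by fun_prop) measurable_const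
    have hηfin : ∀ x, η x ≠ ∞ := by
      intro x; rw [hη]; dsimp only; split_ifs
      exacts [ENNReal.ofReal_ne_top, ENNReal.zero_ne_top]
    have hζfin : ∀ x, ζ x ≠ ∞ := by
      intro x; rw [hζ]; dsimp only; split_ifs
      exacts [ENNReal.ofReal_ne_top, ENNReal.zero_ne_top]
    have hptw : ∀ t s : ℝ,
        (Set.Ioo (min s t) (max s t)).indicator G r * ENNReal.ofReal (|t - s| ^ (α-1))
          ≤ G r * (η t * ζ s + ζ t * η s) := by
      intro t s
      by_cases hmem : r ∈ Set.Ioo (min s t) (max s t)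
      · rw [Set.indicator_of_mem hmem]
        refine mul_le_mul_right ?_ _
        rcases le_or_gt s t with hle | hlt
        · rw [min_eq_left hle, max_eq_right hle] at hmem
          obtain ⟨h1, h2⟩ := hmem
          refine le_trans ?_ le_self_add
          rw [hη, hζ]; dsimp only; rw [if_pos h2, if_pos h1,
            ← ENNReal.ofReal_mul (Real.rpow_nonneg (by linarith) _),
            show |t - s| = t - s from abs_of_pos (by linarith)]
          refine ENNReal.ofReal_le_ofReal ?_
          rw [show α - 1 = (2*α-1) + (-α) from by ring,
            Real.rpow_add (by linarith : (0:ℝ) < t - s)]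
          exact mul_le_mul
            (Real.rpow_le_rpow_of_nonpos (by linarith) (by linarith) (by linarith))
            (Real.rpow_le_rpow_of_nonpos (by linarith) (by linarith) (by linarith))
            (Real.rpow_nonneg (by linarith) _) (Real.rpow_nonneg (by linarith) _)
        · rw [min_eq_right hlt.le, max_eq_left hlt.le] at hmem
          obtain ⟨h1, h2⟩ := hmem
          refine le_trans ?_ le_add_self
          rw [hη, hζ]; dsimp only; rw [if_pos h2, if_pos h1,
            ← ENNReal.ofReal_mul (Real.rpow_nonneg (by linarith) _),
            show |t - s| = s - t from by rw [abs_sub_comm]; exact abs_of_pos (by linarith)]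
          refine ENNReal.ofReal_le_ofReal ?_
          rw [show α - 1 = (-α) + (2*α-1) from by ring,
            Real.rpow_add (by linarith : (0:ℝ) < s - t)]
          exact mul_le_mul
            (Real.rpow_le_rpow_of_nonpos (by linarith) (by linarith) (by linarith))
            (Real.rpow_le_rpow_of_nonpos (by linarith) (by linarith) (by linarith))
            (Real.rpow_nonneg (by linarith) _) (Real.rpow_nonneg (by linarith) _)
      · rw [Set.indicator_of_notMem hmem, zero_mul]; exact zero_le
    have hinner : ∀ t : ℝ, ∫⁻ s in Set.Ioo (0:ℝ) T, G r * (η t * ζ s + ζ t * η s)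
        = G r * (η t * ENNReal.ofReal (r ^ (1-α) / (1-α))
            + ζ t * ENNReal.ofReal ((T-r) ^ (2*α) / (2*α))) := by
      intro t
      rw [lintegral_const_mul' _ _ (hGfin r),
        lintegral_add_left (hζm.const_mul _),
        lintegral_const_mul' _ _ (hηfin t), lintegral_const_mul' _ _ (hζfin t),
        hIio r hr, hIoi r hr]
    calc (∫⁻ t in Set.Ioo (0:ℝ) T, ∫⁻ s in Set.Ioo (0:ℝ) T,
            (Set.Ioo (min s t) (max s t)).indicator G r * ENNReal.ofReal (|t - s| ^ (α-1)))
        ≤ ∫⁻ t in Set.Ioo (0:ℝ) T, ∫⁻ s in Set.Ioo (0:ℝ) T, G r * (η t * ζ s + ζ t * η s) :=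
          lintegral_mono fun t => lintegral_mono fun s => hptw t s
      _ = G r * ((∫⁻ t in Set.Ioo (0:ℝ) T, η t) * ENNReal.ofReal (r ^ (1-α) / (1-α))
            + (∫⁻ t in Set.Ioo (0:ℝ) T, ζ t) * ENNReal.ofReal ((T-r) ^ (2*α) / (2*α))) := by
          rw [lintegral_congr hinner, lintegral_const_mul' _ _ (hGfin r),
            lintegral_add_left (hηm.mul_const _),
            lintegral_mul_const' _ _ ENNReal.ofReal_ne_top,
            lintegral_mul_const' _ _ ENNReal.ofReal_ne_top]
      _ = G r * (ENNReal.ofReal ((T-r) ^ (2*α) / (2*α)) * ENNReal.ofReal (r ^ (1-α) / (1-α))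
            + ENNReal.ofReal (r ^ (1-α) / (1-α)) * ENNReal.ofReal ((T-r) ^ (2*α) / (2*α))) := by
          rw [hIoi r hr, hIio r hr]
      _ ≤ G r * ENNReal.ofReal (2 * (T ^ (2*α) / (2*α)) * (r ^ (1-α) / (1-α))) := by
          refine mul_le_mul_right ?_ _
          have hYb : ENNReal.ofReal ((T-r) ^ (2*α) / (2*α))
              ≤ ENNReal.ofReal (T ^ (2*α) / (2*α)) :=
            ENNReal.ofReal_le_ofReal ((div_le_div_iff_of_pos_right (by linarith : (0:ℝ) < 2*α)).2
              (Real.rpow_le_rpow (by linarith [hr.2]) (by linarith [hr.1]) (by linarith)))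
          calc ENNReal.ofReal ((T-r) ^ (2*α) / (2*α)) * ENNReal.ofReal (r ^ (1-α) / (1-α))
                + ENNReal.ofReal (r ^ (1-α) / (1-α)) * ENNReal.ofReal ((T-r) ^ (2*α) / (2*α))
              = 2 * (ENNReal.ofReal ((T-r) ^ (2*α) / (2*α))
                  * ENNReal.ofReal (r ^ (1-α) / (1-α))) := by ring
            _ ≤ 2 * (ENNReal.ofReal (T ^ (2*α) / (2*α))
                  * ENNReal.ofReal (r ^ (1-α) / (1-α))) :=
                mul_le_mul_right (mul_le_mul_left hYb _) 2
            _ = ENNReal.ofReal (2 * (T ^ (2*α) / (2*α)) * (r ^ (1-α) / (1-α))) := by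
                rw [← ENNReal.ofReal_mul
                    (div_nonneg (Real.rpow_nonneg hT.le _) (by linarith)),
                  show (2:ℝ≥0∞) = ENNReal.ofReal 2 from by norm_num,
                  ← ENNReal.ofReal_mul (by norm_num : (0:ℝ) ≤ 2), ← mul_assoc]
  -- assemble
  have hαne : α ≠ 0 := ne_of_gt hα0
  have h1αne : (1:ℝ) - α ≠ 0 := ne_of_gt (by linarith)
  calc (∫⁻ t in Set.Ioo (0:ℝ) T, ∫⁻ s in Set.Ioo (0:ℝ) T,
          ENNReal.ofReal (‖u t - u s‖ ^ 2 / |t - s| ^ (2 - 2*α)))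
      ≤ ENNReal.ofReal ((1-α)⁻¹) * ∫⁻ t in Set.Ioo (0:ℝ) T, ∫⁻ s in Set.Ioo (0:ℝ) T,
          (ENNReal.ofReal (|t - s| ^ (α-1)) *
            ∫⁻ r in Set.Ioo (min s t) (max s t), G r) := by
        rw [← lintegral_const_mul' _ _ ENNReal.ofReal_ne_top]
        refine lintegral_mono_ae ((ae_restrict_mem measurableSet_Ioo).mono fun t ht => ?_)
        rw [← lintegral_const_mul' _ _ ENNReal.ofReal_ne_top]
        exact lintegral_mono_ae ((ae_restrict_mem measurableSet_Ioo).mono fun s hs =>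
          hpoint t ht s hs)
    _ = ENNReal.ofReal ((1-α)⁻¹) * ∫⁻ t in Set.Ioo (0:ℝ) T, ∫⁻ s in Set.Ioo (0:ℝ) T,
          ∫⁻ r in Set.Ioo (0:ℝ) T,
            (Set.Ioo (min s t) (max s t)).indicator G r
              * ENNReal.ofReal (|t - s| ^ (α-1)) := by
        refine congrArg _ (lintegral_congr_ae ((ae_restrict_mem measurableSet_Ioo).mono
          fun t ht => lintegral_congr_ae ((ae_restrict_mem measurableSet_Ioo).mono
            fun s hs => ?_)))
        have hsub : Set.Ioo (min s t) (max s t) ⊆ Set.Ioo 0 T := fun x hx =>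
          ⟨(lt_min hs.1 ht.1).trans hx.1, hx.2.trans (max_lt hs.2 ht.2)⟩
        show ENNReal.ofReal (|t - s| ^ (α-1)) * (∫⁻ r in Set.Ioo (min s t) (max s t), G r)
          = ∫⁻ r in Set.Ioo (0:ℝ) T,
              (Set.Ioo (min s t) (max s t)).indicator G r * ENNReal.ofReal (|t - s| ^ (α-1))
        rw [lintegral_mul_const' _ _ ENNReal.ofReal_ne_top,
          lintegral_indicator measurableSet_Ioo,
          Measure.restrict_restrict measurableSet_Ioo,
          Set.inter_eq_self_of_subset_left hsub, mul_comm]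
    _ = ENNReal.ofReal ((1-α)⁻¹) * ∫⁻ r in Set.Ioo (0:ℝ) T, ∫⁻ t in Set.Ioo (0:ℝ) T,
          ∫⁻ s in Set.Ioo (0:ℝ) T,
            (Set.Ioo (min s t) (max s t)).indicator G r
              * ENNReal.ofReal (|t - s| ^ (α-1)) := by
        rw [lintegral_congr hswap1, hswap2]
    _ ≤ ENNReal.ofReal ((1-α)⁻¹) * ∫⁻ r in Set.Ioo (0:ℝ) T,
          G r * ENNReal.ofReal (2 * (T ^ (2*α) / (2*α)) * (r ^ (1-α) / (1-α))) :=
        mul_le_mul_right (lintegral_mono_ae ((ae_restrict_mem measurableSet_Ioo).mono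
          fun r hr => hKey r hr)) _
    _ = ENNReal.ofReal ((1-α)⁻¹) * ∫⁻ r in Set.Ioo (0:ℝ) T,
          ENNReal.ofReal (T ^ (2*α) / (α*(1-α))) * ENNReal.ofReal (r * ‖u' r‖ ^ 2) := by
        refine congrArg _ (lintegral_congr_ae ((ae_restrict_mem measurableSet_Ioo).mono
          fun r hr => ?_))
        have hr0 : (0:ℝ) < r := hr.1
        have hdv : deriv v r = v' r := (hderiv' r hr).deriv
        have hnn2 : ((‖v' r‖₊ : ℝ≥0∞)) ^ 2 = ENNReal.ofReal (‖u' r‖ ^ 2) := by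
          rw [ENNReal.ofReal_pow (norm_nonneg _), ← hnorm' r, ofReal_norm_eq_enorm]; rfl
        have hscal : r ^ α * (2 * (T ^ (2*α) / (2*α)) * (r ^ (1-α) / (1-α)))
            = T ^ (2*α) / (α*(1-α)) * r := by
          have hr1 : r ^ α * r ^ (1-α) = r := by
            rw [← Real.rpow_add hr0, show α + (1-α) = 1 from by ring, Real.rpow_one]
          have h2 : ∀ X Y : ℝ, r ^ α * (2 * (X / (2*α)) * (Y / (1-α)))
              = X / (α*(1-α)) * (r ^ α * Y) := fun X Y => by
            field_simp
          rw [h2, hr1]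
        simp only [hGdef]
        rw [hdv, hnn2, mul_comm (ENNReal.ofReal (r ^ α)) (ENNReal.ofReal (‖u' r‖ ^ 2)),
          mul_assoc, ← ENNReal.ofReal_mul (Real.rpow_nonneg hr0.le _), hscal,
          ENNReal.ofReal_mul (div_nonneg (Real.rpow_nonneg hT.le _)
            (mul_nonneg hα0.le (by linarith))),
          ENNReal.ofReal_mul hr0.le]
        ring
    _ = ENNReal.ofReal ((1-α)⁻¹) * (ENNReal.ofReal (T ^ (2*α) / (α*(1-α)))
          * ENNReal.ofReal (∫ t in Set.Ioo (0:ℝ) T, t * ‖u' t‖ ^ 2)) := by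
        rw [lintegral_const_mul' _ _ ENNReal.ofReal_ne_top,
          ← ofReal_integral_eq_lintegral_ofReal hu'2
            ((ae_restrict_iff' measurableSet_Ioo).2 (Filter.Eventually.of_forall
              fun r hr => mul_nonneg hr.1.le (sq_nonneg _)))]
    _ = ENNReal.ofReal (T ^ (2*α) / (α*(1-α)^2) * ∫ t in Set.Ioo (0:ℝ) T, t * ‖u' t‖ ^ 2) := by
        rw [← mul_assoc, ← ENNReal.ofReal_mul (inv_nonneg.2 (by linarith)),
          show (1-α)⁻¹ * (T ^ (2*α) / (α*(1-α))) = T ^ (2*α) / (α*(1-α)^2) from by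
            rw [inv_mul_eq_div, div_div]
            congr 1
            ring,
          ← ENNReal.ofReal_mul (div_nonneg (Real.rpow_nonneg hT.le _)
            (mul_nonneg hα0.le (sq_nonneg _)))]
end
end

section
/- Let T > 0, A ≥ 0, C > 0, let f : [0,T] → [0,∞) be integrable and let X : [0,T] → [0,∞) be continuous, satisfying X(t) ≤ A + C ∫₀ᵗ f(τ) X(τ) log(e + X(τ)) dτ for all t ∈ [0,T]. Then for all t ∈ [0,T]: X(t) ≤ (e + A)^{exp( C ∫₀ᵗ f(τ) dτ )}. -/
noncomputable section

open MeasureTheory Real Set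

lemma aux_log_sub {u v : ℝ} (hv : 0 < v) (h : v ≤ u) :
    Real.log u - Real.log v ≤ (u - v) / v := by
  have hu : 0 < u := lt_of_lt_of_le hv h
  have h1 : Real.log (u / v) ≤ u / v - 1 := Real.log_le_sub_one_of_pos (by positivity)
  rw [Real.log_div hu.ne' hv.ne'] at h1
  have h2 : u / v - 1 = (u - v) / v := by field_simp
  linarith

lemma aux_one_le_log {a : ℝ} (ha : 0 ≤ a) : 1 ≤ Real.log (Real.exp 1 + a) := by
  have h1 : Real.exp 1 ≤ Real.exp 1 + a := by linarith
  have := Real.log_le_log (Real.exp_pos 1) h1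
  rwa [Real.log_exp] at this

/-- `Φ(y) = log (log (e + y))`. -/
def lgPhi (y : ℝ) : ℝ := Real.log (Real.log (Real.exp 1 + y))

/-- `ψ(y) = (e + y) * log (e + y)`. -/
def lgPsi (y : ℝ) : ℝ := (Real.exp 1 + y) * Real.log (Real.exp 1 + y)

/-- `prim φ t = ∫₀ᵗ φ`. -/
def lgPrim (φ : ℝ → ℝ) (t : ℝ) : ℝ := ∫ τ in Set.Ioc (0:ℝ) t, φ τ

lemma lgPsi_pos {a : ℝ} (ha : 0 ≤ a) : 0 < lgPsi a := by
  have := aux_one_le_log ha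
  have hE := Real.exp_pos 1
  unfold lgPsi
  nlinarith

lemma lgPhi_step {a b : ℝ} (ha : 0 ≤ a) (hab : a ≤ b) :
    lgPhi b - lgPhi a ≤ (b - a) / lgPsi a := by
  have hE : 0 < Real.exp 1 := Real.exp_pos 1
  have hEa : 0 < Real.exp 1 + a := by linarith
  have hla : 1 ≤ Real.log (Real.exp 1 + a) := aux_one_le_log ha
  have hlb : Real.log (Real.exp 1 + a) ≤ Real.log (Real.exp 1 + b) :=
    Real.log_le_log hEa (by linarith)
  have h1 : Real.log (Real.exp 1 + b) - Real.log (Real.exp 1 + a) ≤ (b - a) / (Real.exp 1 + a) := by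
    have := aux_log_sub hEa (show Real.exp 1 + a ≤ Real.exp 1 + b by linarith)
    simpa using this
  have h2 : Real.log (Real.log (Real.exp 1 + b)) - Real.log (Real.log (Real.exp 1 + a)) ≤
      (Real.log (Real.exp 1 + b) - Real.log (Real.exp 1 + a)) / Real.log (Real.exp 1 + a) :=
    aux_log_sub (by linarith) hlb
  have h3 : (Real.log (Real.exp 1 + b) - Real.log (Real.exp 1 + a)) / Real.log (Real.exp 1 + a) ≤
      ((b - a) / (Real.exp 1 + a)) / Real.log (Real.exp 1 + a) := by
    gcongr
  rw [div_div] at h3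
  unfold lgPhi lgPsi
  linarith

lemma lgPsi_mono {a b : ℝ} (ha : 0 ≤ a) (hab : a ≤ b) : lgPsi a ≤ lgPsi b := by
  have hE : 0 < Real.exp 1 := Real.exp_pos 1
  have hla : 1 ≤ Real.log (Real.exp 1 + a) := aux_one_le_log ha
  have hlb : Real.log (Real.exp 1 + a) ≤ Real.log (Real.exp 1 + b) :=
    Real.log_le_log (by linarith) (by linarith)
  exact mul_le_mul (by linarith) hlb (by linarith) (by linarith)

lemma aux_xlog_le {x y : ℝ} (hx : 0 ≤ x) (hxy : x ≤ y) :
    x * Real.log (Real.exp 1 + x) ≤ lgPsi y := by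
  have hE : 0 < Real.exp 1 := Real.exp_pos 1
  have hlx : 1 ≤ Real.log (Real.exp 1 + x) := aux_one_le_log hx
  have hl : Real.log (Real.exp 1 + x) ≤ Real.log (Real.exp 1 + y) :=
    Real.log_le_log (by linarith) (by linarith)
  exact mul_le_mul (by linarith) hl (by linarith) (by linarith)

/-- **Logarithmic Gronwall inequality.**  If a nonnegative continuous function `X` on `[0,T]`
satisfies `X t ≤ A + C ∫₀ᵗ f τ * X τ * log (e + X τ) dτ` with `f ≥ 0` integrable, then
`X t ≤ (e + A) ^ (exp (C ∫₀ᵗ f))`. -/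
theorem log_gronwall (T A C : ℝ) (f X : ℝ → ℝ)
    (hT : 0 < T) (hA : 0 ≤ A) (hC : 0 < C)
    (hf_int : IntegrableOn f (Set.Icc 0 T))
    (hf_nonneg : ∀ t ∈ Set.Icc (0:ℝ) T, 0 ≤ f t)
    (hX_cont : ContinuousOn X (Set.Icc 0 T))
    (hX_nonneg : ∀ t ∈ Set.Icc (0:ℝ) T, 0 ≤ X t)
    (hX : ∀ t ∈ Set.Icc (0:ℝ) T,
      X t ≤ A + C * ∫ τ in Set.Ioc (0:ℝ) t, f τ * X τ * Real.log (Real.exp 1 + X τ)) :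
    ∀ t ∈ Set.Icc (0:ℝ) T,
      X t ≤ (Real.exp 1 + A) ^ Real.exp (C * ∫ τ in Set.Ioc (0:ℝ) t, f τ) := by
  have hE0 : (0:ℝ) < Real.exp 1 := Real.exp_pos 1
  set g : ℝ → ℝ := fun τ => f τ * X τ * Real.log (Real.exp 1 + X τ) with hg_def
  -- nonnegativity of the integrand
  have hg_nonneg : ∀ τ ∈ Set.Icc (0:ℝ) T, 0 ≤ g τ := by
    intro τ hτ
    have h1 := hf_nonneg τ hτ
    have h2 := hX_nonneg τ hτ
    have h3 : 0 ≤ Real.log (Real.exp 1 + X τ) := by linarith [aux_one_le_log h2]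
    rw [hg_def]
    positivity
  -- a bound on X
  obtain ⟨M, hM⟩ : ∃ M, ∀ τ ∈ Set.Icc (0:ℝ) T, X τ ≤ M := by
    obtain ⟨M, hM⟩ := (isCompact_Icc.image_of_continuousOn hX_cont).bddAbove
    exact ⟨M, fun τ hτ => hM (Set.mem_image_of_mem X hτ)⟩
  have h0T : (0:ℝ) ∈ Set.Icc (0:ℝ) T := ⟨le_rfl, hT.le⟩
  have hM0 : 0 ≤ M := le_trans (hX_nonneg 0 h0T) (hM 0 h0T)
  -- integrability of g
  have hXm : AEStronglyMeasurable X (volume.restrict (Set.Icc 0 T)) :=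
    hX_cont.aestronglyMeasurable measurableSet_Icc
  have hlog_cont : ContinuousOn (fun τ => Real.log (Real.exp 1 + X τ)) (Set.Icc 0 T) := by
    apply ContinuousOn.log (continuousOn_const.add hX_cont)
    intro τ hτ
    have := hX_nonneg τ hτ
    have hpos : 0 < Real.exp 1 + X τ := by linarith [Real.exp_pos 1]
    exact hpos.ne'
  have hgm : AEStronglyMeasurable g (volume.restrict (Set.Icc 0 T)) := by
    rw [hg_def]
    exact (hf_int.aestronglyMeasurable.mul hXm).mul
      (hlog_cont.aestronglyMeasurable measurableSet_Icc)
  set K := M * Real.log (Real.exp 1 + M) with hK_def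
  have hK0 : 0 ≤ K := mul_nonneg hM0 (by linarith [aux_one_le_log hM0])
  have hg_le : ∀ τ ∈ Set.Icc (0:ℝ) T, g τ ≤ K * f τ := by
    intro τ hτ
    have h2 := hX_nonneg τ hτ
    have h4 : X τ * Real.log (Real.exp 1 + X τ) ≤ K := by
      rw [hK_def]
      exact mul_le_mul (hM τ hτ)
        (Real.log_le_log (by positivity) (by linarith [hM τ hτ]))
        (by linarith [aux_one_le_log h2]) hM0
    calc g τ = f τ * (X τ * Real.log (Real.exp 1 + X τ)) := by rw [hg_def]; ring
      _ ≤ f τ * K := mul_le_mul_of_nonneg_left h4 (hf_nonneg τ hτ)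
      _ = K * f τ := mul_comm _ _
  have hg_int : IntegrableOn g (Set.Icc 0 T) := by
    apply Integrable.mono' (hf_int.const_mul K) hgm
    rw [ae_restrict_iff' measurableSet_Icc]
    filter_upwards with τ hτ
    rw [Real.norm_eq_abs, abs_of_nonneg (hg_nonneg τ hτ)]
    exact hg_le τ hτ
  -- subsets
  have hsub : ∀ s u : ℝ, 0 ≤ s → u ≤ T → Set.Ioc s u ⊆ Set.Icc 0 T := by
    intro s u h0 hu τ hτ
    exact ⟨le_trans h0 (le_of_lt hτ.1), le_trans hτ.2 hu⟩
  -- splitting of the primitive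
  have hprim_split : ∀ φ : ℝ → ℝ, IntegrableOn φ (Set.Icc 0 T) →
      ∀ s u : ℝ, 0 ≤ s → s ≤ u → u ≤ T →
      lgPrim φ u = lgPrim φ s + ∫ τ in Set.Ioc s u, φ τ := by
    intro φ hφ s u h0 hsu huT
    unfold lgPrim
    rw [← Set.Ioc_union_Ioc_eq_Ioc h0 hsu]
    exact setIntegral_union (Set.Ioc_disjoint_Ioc_of_le le_rfl) measurableSet_Ioc
      (hφ.mono_set (hsub 0 s le_rfl (hsu.trans huT)))
      (hφ.mono_set (hsub s u h0 huT))
  -- nonnegativity of primitives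
  have hprimg_nonneg : ∀ r ∈ Set.Icc (0:ℝ) T, 0 ≤ lgPrim g r := by
    intro r hr
    exact setIntegral_nonneg measurableSet_Ioc fun τ hτ => hg_nonneg τ (hsub 0 r le_rfl hr.2 hτ)
  have hprimf_nonneg : ∀ r ∈ Set.Icc (0:ℝ) T, 0 ≤ lgPrim f r := by
    intro r hr
    exact setIntegral_nonneg measurableSet_Ioc fun τ hτ => hf_nonneg τ (hsub 0 r le_rfl hr.2 hτ)
  have hY_nonneg : ∀ r ∈ Set.Icc (0:ℝ) T, 0 ≤ A + C * lgPrim g r := by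
    intro r hr
    nlinarith [hprimg_nonneg r hr]
  -- monotonicity of Y
  have hY_mono : ∀ s u : ℝ, 0 ≤ s → s ≤ u → u ≤ T →
      A + C * lgPrim g s ≤ A + C * lgPrim g u := by
    intro s u h0 hsu huT
    have h := hprim_split g hg_int s u h0 hsu huT
    have h2 : 0 ≤ ∫ τ in Set.Ioc s u, g τ :=
      setIntegral_nonneg measurableSet_Ioc fun τ hτ => hg_nonneg τ (hsub s u h0 huT hτ)
    rw [h]
    nlinarith
  -- X ≤ Y
  have hXY : ∀ t ∈ Set.Icc (0:ℝ) T, X t ≤ A + C * lgPrim g t := by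
    intro t ht
    have := hX t ht
    unfold lgPrim
    rw [hg_def]
    exact this
  -- continuity
  have hprimg_cont : ContinuousOn (lgPrim g) (Set.Icc 0 T) :=
    intervalIntegral.continuousOn_primitive hg_int
  have hprimf_cont : ContinuousOn (lgPrim f) (Set.Icc 0 T) :=
    intervalIntegral.continuousOn_primitive hf_int
  have hY_cont : ContinuousOn (fun r => A + C * lgPrim g r) (Set.Icc 0 T) :=
    continuousOn_const.add (continuousOn_const.mul hprimg_cont)
  have hEY_cont : ContinuousOn (fun r => Real.exp 1 + (A + C * lgPrim g r)) (Set.Icc 0 T) :=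
    continuousOn_const.add hY_cont
  have hEYpos : ∀ r ∈ Set.Icc (0:ℝ) T, 0 < Real.exp 1 + (A + C * lgPrim g r) := by
    intro r hr
    linarith [hY_nonneg r hr]
  have hlogY_cont : ContinuousOn (fun r => Real.log (Real.exp 1 + (A + C * lgPrim g r)))
      (Set.Icc 0 T) := hEY_cont.log fun r hr => (hEYpos r hr).ne'
  have hψY_cont : ContinuousOn (fun r => lgPsi (A + C * lgPrim g r)) (Set.Icc 0 T) := by
    unfold lgPsi
    exact hEY_cont.mul hlogY_cont
  have hPhiY_cont : ContinuousOn (fun r => lgPhi (A + C * lgPrim g r)) (Set.Icc 0 T) := by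
    unfold lgPhi
    exact hlogY_cont.log fun r hr =>
      ne_of_gt (by linarith [aux_one_le_log (hY_nonneg r hr)])
  -- the main claim, with an ε of room
  have main : ∀ ε : ℝ, 0 < ε → ∀ t ∈ Set.Icc (0:ℝ) T,
      lgPhi (A + C * lgPrim g t) ≤ lgPhi A + (1 + ε) * C * lgPrim f t := by
    intro ε hε t ht
    set S : Set ℝ := {r | r ∈ Set.Icc 0 t ∧
      lgPhi (A + C * lgPrim g r) ≤ lgPhi A + (1 + ε) * C * lgPrim f r} with hS_def
    have hprim0 : ∀ φ : ℝ → ℝ, lgPrim φ 0 = 0 := by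
      intro φ; unfold lgPrim; simp
    have h0S : (0:ℝ) ∈ S := by
      constructor
      · exact ⟨le_rfl, ht.1⟩
      · rw [hprim0, hprim0]
        norm_num
    have hSbdd : BddAbove S := ⟨t, fun r hr => hr.1.2⟩
    have hSne : S.Nonempty := ⟨0, h0S⟩
    have htT : Set.Icc (0:ℝ) t ⊆ Set.Icc 0 T := Set.Icc_subset_Icc le_rfl ht.2
    have hW_cont : ContinuousOn
        (fun r => lgPhi A + (1 + ε) * C * lgPrim f r - lgPhi (A + C * lgPrim g r))
        (Set.Icc 0 T) :=
      (continuousOn_const.add (continuousOn_const.mul hprimf_cont)).sub hPhiY_cont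
    have hSclosed : IsClosed S := by
      have hSeq : S = Set.Icc 0 t ∩
          (fun r => lgPhi A + (1 + ε) * C * lgPrim f r - lgPhi (A + C * lgPrim g r)) ⁻¹'
            Set.Ici 0 := by
        ext r
        simp only [hS_def, Set.mem_setOf_eq, Set.mem_inter_iff, Set.mem_preimage, Set.mem_Ici]
        constructor
        · rintro ⟨h1, h2⟩; exact ⟨h1, by linarith⟩
        · rintro ⟨h1, h2⟩; exact ⟨h1, by linarith⟩
      rw [hSeq]
      exact (hW_cont.mono htT).preimage_isClosed_of_isClosed isClosed_Icc isClosed_Ici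
    set s := sSup S with hs_def
    have hsS : s ∈ S := hSclosed.csSup_mem hSne hSbdd
    have hst : s ≤ t := csSup_le hSne fun r hr => hr.1.2
    rcases eq_or_lt_of_le hst with heq | hlt
    · rw [← heq]; exact hsS.2
    · exfalso
      have hs0 : 0 ≤ s := le_csSup hSbdd h0S
      have hsIcc : s ∈ Set.Icc (0:ℝ) T := ⟨hs0, le_trans hst ht.2⟩
      have hYs0 : 0 ≤ A + C * lgPrim g s := hY_nonneg s hsIcc
      have hψs : 0 < lgPsi (A + C * lgPrim g s) := lgPsi_pos hYs0
      -- pick u slightly to the right of s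
      have hψs_lt : lgPsi (A + C * lgPrim g s) < (1 + ε) * lgPsi (A + C * lgPrim g s) := by
        nlinarith
      have hev : ∀ᶠ r in nhdsWithin s (Set.Icc 0 T),
          lgPsi (A + C * lgPrim g r) < (1 + ε) * lgPsi (A + C * lgPrim g s) :=
        Filter.Tendsto.eventually_lt_const hψs_lt (hψY_cont s hsIcc)
      have hIocsubT : Set.Ioc s t ⊆ Set.Icc 0 T := hsub s t hs0 ht.2
      have hev2 : ∀ᶠ r in nhdsWithin s (Set.Ioc s t),
          lgPsi (A + C * lgPrim g r) < (1 + ε) * lgPsi (A + C * lgPrim g s) :=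
        hev.filter_mono (nhdsWithin_mono s hIocsubT)
      haveI : (nhdsWithin s (Set.Ioc s t)).NeBot := by
        rw [← mem_closure_iff_nhdsWithin_neBot, closure_Ioc hlt.ne]
        exact ⟨le_rfl, hlt.le⟩
      obtain ⟨u, hu_mem, hu_lt⟩ := (eventually_mem_nhdsWithin.and hev2).exists
      have hus : s < u := hu_mem.1
      have hut : u ≤ t := hu_mem.2
      have huIccT : u ∈ Set.Icc (0:ℝ) T := ⟨by linarith, by linarith [ht.2]⟩
      -- pointwise bound on (s, u]
      have hpt : ∀ τ ∈ Set.Ioc s u,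
          g τ ≤ f τ * ((1 + ε) * lgPsi (A + C * lgPrim g s)) := by
        intro τ hτ
        have hτIcc : τ ∈ Set.Icc (0:ℝ) T := ⟨by linarith [hτ.1], by linarith [hτ.2, huIccT.2]⟩
        have h1 : X τ * Real.log (Real.exp 1 + X τ) ≤ lgPsi (A + C * lgPrim g τ) :=
          aux_xlog_le (hX_nonneg τ hτIcc) (hXY τ hτIcc)
        have h2 : lgPsi (A + C * lgPrim g τ) ≤ lgPsi (A + C * lgPrim g u) :=
          lgPsi_mono (hY_nonneg τ hτIcc)
            (hY_mono τ u (by linarith [hτ.1]) hτ.2 huIccT.2)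
        have h3 : lgPsi (A + C * lgPrim g u) ≤ (1 + ε) * lgPsi (A + C * lgPrim g s) :=
          le_of_lt hu_lt
        calc g τ = f τ * (X τ * Real.log (Real.exp 1 + X τ)) := by rw [hg_def]; ring
          _ ≤ f τ * ((1 + ε) * lgPsi (A + C * lgPrim g s)) :=
            mul_le_mul_of_nonneg_left (by linarith) (hf_nonneg τ hτIcc)
      have hIocsu : Set.Ioc s u ⊆ Set.Icc 0 T := hsub s u hs0 huIccT.2
      have hint1 : (∫ τ in Set.Ioc s u, g τ) ≤
          (∫ τ in Set.Ioc s u, f τ) * ((1 + ε) * lgPsi (A + C * lgPrim g s)) := by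
        have h1 := setIntegral_mono_on (hg_int.mono_set hIocsu)
          ((hf_int.mono_set hIocsu).mul_const ((1 + ε) * lgPsi (A + C * lgPrim g s)))
          measurableSet_Ioc hpt
        rwa [integral_mul_const] at h1
      have hintf0 : 0 ≤ ∫ τ in Set.Ioc s u, f τ :=
        setIntegral_nonneg measurableSet_Ioc fun τ hτ => hf_nonneg τ (hIocsu hτ)
      have hYsu : lgPrim g u = lgPrim g s + ∫ τ in Set.Ioc s u, g τ :=
        hprim_split g hg_int s u hs0 hus.le huIccT.2
      have hIsu : lgPrim f u = lgPrim f s + ∫ τ in Set.Ioc s u, f τ :=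
        hprim_split f hf_int s u hs0 hus.le huIccT.2
      have hYle : A + C * lgPrim g s ≤ A + C * lgPrim g u :=
        hY_mono s u hs0 hus.le huIccT.2
      have h4 := lgPhi_step hYs0 hYle
      have h5 : (A + C * lgPrim g u) - (A + C * lgPrim g s) = C * ∫ τ in Set.Ioc s u, g τ := by
        rw [hYsu]; ring
      rw [h5] at h4
      have h6 : C * (∫ τ in Set.Ioc s u, g τ) / lgPsi (A + C * lgPrim g s) ≤
          (1 + ε) * C * ∫ τ in Set.Ioc s u, f τ := by
        rw [div_le_iff₀ hψs]
        calc C * ∫ τ in Set.Ioc s u, g τ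
            ≤ C * ((∫ τ in Set.Ioc s u, f τ) * ((1 + ε) * lgPsi (A + C * lgPrim g s))) :=
              mul_le_mul_of_nonneg_left hint1 hC.le
          _ = (1 + ε) * C * (∫ τ in Set.Ioc s u, f τ) * lgPsi (A + C * lgPrim g s) := by ring
      have hstep : lgPhi (A + C * lgPrim g u) ≤
          lgPhi (A + C * lgPrim g s) + (1 + ε) * C * ∫ τ in Set.Ioc s u, f τ := by linarith
      have huS : u ∈ S := by
        refine ⟨⟨by linarith, hut⟩, ?_⟩
        have h7 := hsS.2
        calc lgPhi (A + C * lgPrim g u)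
            ≤ lgPhi (A + C * lgPrim g s) + (1 + ε) * C * (∫ τ in Set.Ioc s u, f τ) := hstep
          _ ≤ lgPhi A + (1 + ε) * C * lgPrim f s
              + (1 + ε) * C * (∫ τ in Set.Ioc s u, f τ) := by linarith
          _ = lgPhi A + (1 + ε) * C * lgPrim f u := by rw [hIsu]; ring
      exact absurd (le_csSup hSbdd huS) (not_le.2 hus)
  -- pass to the limit ε → 0
  intro t ht
  have hIt0 : 0 ≤ lgPrim f t := hprimf_nonneg t ht
  have key : lgPhi (A + C * lgPrim g t) ≤ lgPhi A + C * lgPrim f t := by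
    by_contra hcon
    push_neg at hcon
    have hB0 : 0 ≤ C * lgPrim f t := mul_nonneg hC.le hIt0
    rcases eq_or_lt_of_le hB0 with h0 | h0
    · have h1 := main 1 one_pos t ht
      nlinarith
    · set δ := lgPhi (A + C * lgPrim g t) - lgPhi A - C * lgPrim f t with hδ
      have hδ0 : 0 < δ := by rw [hδ]; linarith
      have h1 := main (δ / (2 * (C * lgPrim f t))) (by positivity) t ht
      have h2 : (1 + δ / (2 * (C * lgPrim f t))) * C * lgPrim f t
          = C * lgPrim f t + δ / 2 := by
        have hIne : lgPrim f t ≠ 0 := by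
          intro h; rw [h, mul_zero] at h0; exact lt_irrefl _ h0
        field_simp
      rw [h2] at h1
      rw [hδ] at hδ0
      linarith
  -- conclude
  have hYt0 : 0 ≤ A + C * lgPrim g t := hY_nonneg t ht
  have hEY : 0 < Real.exp 1 + (A + C * lgPrim g t) := by linarith
  have hlY : 1 ≤ Real.log (Real.exp 1 + (A + C * lgPrim g t)) := aux_one_le_log hYt0
  have hlA : 1 ≤ Real.log (Real.exp 1 + A) := aux_one_le_log hA
  have h1 : Real.log (Real.exp 1 + (A + C * lgPrim g t)) ≤
      Real.log (Real.exp 1 + A) * Real.exp (C * lgPrim f t) := by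
    have h2 : Real.log (Real.log (Real.exp 1 + (A + C * lgPrim g t))) ≤
        Real.log (Real.log (Real.exp 1 + A)) + C * lgPrim f t := key
    calc Real.log (Real.exp 1 + (A + C * lgPrim g t))
        = Real.exp (Real.log (Real.log (Real.exp 1 + (A + C * lgPrim g t)))) :=
          (Real.exp_log (by linarith)).symm
      _ ≤ Real.exp (Real.log (Real.log (Real.exp 1 + A)) + C * lgPrim f t) :=
          Real.exp_le_exp.2 h2
      _ = Real.log (Real.exp 1 + A) * Real.exp (C * lgPrim f t) := by
          rw [Real.exp_add, Real.exp_log (by linarith)]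
  have h3 : Real.exp 1 + (A + C * lgPrim g t) ≤
      (Real.exp 1 + A) ^ Real.exp (C * lgPrim f t) := by
    rw [Real.rpow_def_of_pos (by linarith)]
    calc Real.exp 1 + (A + C * lgPrim g t)
        = Real.exp (Real.log (Real.exp 1 + (A + C * lgPrim g t))) := (Real.exp_log hEY).symm
      _ ≤ Real.exp (Real.log (Real.exp 1 + A) * Real.exp (C * lgPrim f t)) :=
          Real.exp_le_exp.2 h1
  have h4 : X t ≤ A + C * lgPrim g t := hXY t ht
  show X t ≤ (Real.exp 1 + A) ^ Real.exp (C * lgPrim f t)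
  linarith
end
end
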